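/- arXiv:1903.02491 — 3 statements merged into one kernel-verified Lean document; each statement's English description precedes it below -/
import Mathlib

section
/- Let H be a (possibly noncommutative) ring, K a commutative ring, and τ : H → K an additive map satisfying τ(rr') = τ(r'r) for all r, r' ∈ H. Let a_{ij} ∈ K and h_{ij} ∈ H be given for every edge (i,j) ∈ E. Then det_τ Δ_[m] = Σ_{F ∈ ℱ→_m} a_F · ∏_{c ∈ 𝒞(F)} (1 − τ(h_c)), where the left-hand side is the cycle expansion det_τ Δ_[m] := Σ_{σ ∈ S_m} ε(σ) · ∏_{i fixed by σ} (Σ_{j ≠ i} a_{ij}) · ∏_{nontrivial cycles (i₁…i_r) of σ} (−1)^r a_{i₁i₂}⋯a_{i_ri₁} τ(h_{i₁i₂}⋯h_{i_ri₁}). (Centrality of τ makes each factor τ(h_{i₁i₂}⋯h_{i_ri₁}) independent of the chosen starting point of the cycle.) -/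
/-!
Expanding the diagonal entry `∑_{j ≠ i} a i j` at every fixed point of `σ`, the term of `σ` in
`det_τ Δ` becomes a sum over the maps `f : U → V` without fixed points that agree with `σ` off its
fixed points; the sign of `σ` cancels the factors `(-1)^ℓ(c)` up to one `-1` per nontrivial cycle,
so each cycle `c` of `σ` contributes `-τ(h_c)`. After exchanging the two sums, the permutations
compatible with a fixed `f` are in bijection with the sets of cycles of `f` (a compatible `σ`
is determined by the cycles of `f` it keeps), and the inner sum becomes
`∑_{S ⊆ 𝒞(F)} ∏_{c ∈ S} (-τ(h_c)) = ∏_{c ∈ 𝒞(F)} (1 - τ(h_c))`.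
-/

open Finset Function

section Defs

variable {V : Type*} [Fintype V] [DecidableEq V]
variable {H : Type*} [Ring H] {K : Type*} [CommRing K]

/-- Ordered product of the edge values along the path `x, g x, g^[2] x, …, g^[r] x`. -/
def pathProd (h : V → V → H) (g : V → V) (x : V) (r : ℕ) : H :=
  ((List.range r).map fun t => h (g^[t] x) (g^[t + 1] x)).prod

/-- `x` is the canonical (`enc`-minimal) point on a nontrivial cycle of `g`. -/
def IsCycleRep (enc : V → ℕ) (g : V → V) (x : V) : Prop :=
  2 ≤ minimalPeriod g x ∧ ∀ t : ℕ, enc x ≤ enc (g^[t] x)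

/-- The canonical representatives of the (nontrivial) cycles of `g`. -/
noncomputable def cycleReps (enc : V → ℕ) (g : V → V) : Finset V :=
  @Finset.filter V (IsCycleRep enc g) (Classical.decPred _) Finset.univ

/-- The cycle expansion `det_τ Δ`: the sum over permutations `σ` of `ε(σ)` times the
product over fixed points of the diagonal entries `diag` times the product over nontrivial
cycles of `(-1)^r · (product of the `aa`-weights along the cycle) · τ(ordered product of the
`hh`-holonomies along the cycle)`. -/
noncomputable def detExp (τ : H → K) (enc : V → ℕ) (diag : V → K)
    (aa : V → V → K) (hh : V → V → H) : K :=
  ∑ σ : Equiv.Perm V,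
    ((Equiv.Perm.sign σ : ℤ) : K) *
      (∏ x ∈ Finset.univ.filter fun x => σ x = x, diag x) *
      ∏ x ∈ cycleReps enc ⇑σ,
        (-1 : K) ^ minimalPeriod (⇑σ) x *
          (∏ t ∈ Finset.range (minimalPeriod (⇑σ) x), aa ((⇑σ)^[t] x) ((⇑σ)^[t + 1] x)) *
          τ (pathProd hh (⇑σ) x (minimalPeriod (⇑σ) x))

end Defs

/-- Extension of `f : U → V` to all of `V = {1,…,n}`, fixing the well pointwise. -/
def extFun {n m : ℕ} (hmn : m ≤ n) (f : Fin m → Fin n) : Fin n → Fin n :=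
  fun j => if h : (j : ℕ) < m then f ⟨(j : ℕ), h⟩ else j

section Orbit

variable {α : Type*} {g : α → α} {x : α}

theorem exists_iterate_iterate_eq_self (hx : x ∈ periodicPts g) (t : ℕ) :
    ∃ s, g^[s] (g^[t] x) = x := by
  refine ⟨t * (minimalPeriod g x - 1), ?_⟩
  have hpos := minimalPeriod_pos_of_mem_periodicPts hx
  rw [← iterate_add_apply, Nat.mul_sub_one, Nat.sub_add_cancel (Nat.le_mul_of_pos_right t hpos)]
  exact (isPeriodicPt_minimalPeriod g x).const_mul t

theorem two_le_minimalPeriod_iff (hx : x ∈ periodicPts g) :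
    2 ≤ minimalPeriod g x ↔ g x ≠ x := by
  have hpos := minimalPeriod_pos_of_mem_periodicPts hx
  have hone : minimalPeriod g x = 1 ↔ g x = x := minimalPeriod_eq_one_iff_isFixedPt
  rw [Ne, ← hone]
  omega

variable [DecidableEq α]

noncomputable def orbitFinset (g : α → α) (x : α) : Finset α :=
  (range (minimalPeriod g x)).image (g^[·] x)

theorem mem_orbitFinset_iff {y : α} (hx : x ∈ periodicPts g) :
    y ∈ orbitFinset g x ↔ ∃ t, g^[t] x = y := by
  simp only [orbitFinset, mem_image, mem_range]
  refine ⟨fun ⟨t, _, ht⟩ => ⟨t, ht⟩, fun ⟨t, ht⟩ => ⟨t % minimalPeriod g x, ?_, ?_⟩⟩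
  · exact Nat.mod_lt _ (minimalPeriod_pos_of_mem_periodicPts hx)
  · rw [iterate_mod_minimalPeriod_eq, ht]

theorem prod_orbitFinset {M : Type*} [CommMonoid M] (F : α → M) :
    ∏ y ∈ orbitFinset g x, F y = ∏ t ∈ range (minimalPeriod g x), F (g^[t] x) :=
  prod_image fun _ hs _ ht hst =>
    iterate_injOn_Iio_minimalPeriod (by simpa using hs) (by simpa using ht) hst

end Orbit

section CycleReps

variable {α : Type*} [Fintype α] {enc : α → ℕ} {g : α → α} {x r r' : α}

@[simp]
theorem mem_cycleReps :
    x ∈ cycleReps enc g ↔ 2 ≤ minimalPeriod g x ∧ ∀ t, enc x ≤ enc (g^[t] x) := by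
  simp [cycleReps, IsCycleRep]

theorem mem_periodicPts_of_mem_cycleReps (hx : x ∈ cycleReps enc g) : x ∈ periodicPts g :=
  minimalPeriod_pos_iff_mem_periodicPts.1 (by have := (mem_cycleReps.1 hx).1; omega)

theorem apply_ne_of_mem_cycleReps (hx : x ∈ cycleReps enc g) : g x ≠ x :=
  (two_le_minimalPeriod_iff (mem_periodicPts_of_mem_cycleReps hx)).1 (mem_cycleReps.1 hx).1

theorem exists_mem_cycleReps_iterate_eq (hx : x ∈ periodicPts g) (hgx : g x ≠ x) :
    ∃ r ∈ cycleReps enc g, ∃ s, g^[s] r = x := by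
  classical
  obtain ⟨r, hr, hmin⟩ := (orbitFinset g x).exists_min_image enc
    ⟨x, (mem_orbitFinset_iff hx).2 ⟨0, rfl⟩⟩
  obtain ⟨t, rfl⟩ := (mem_orbitFinset_iff hx).1 hr
  refine ⟨g^[t] x, mem_cycleReps.2 ⟨?_, fun u => hmin _ ?_⟩, exists_iterate_iterate_eq_self hx t⟩
  · rwa [minimalPeriod_apply_iterate hx, two_le_minimalPeriod_iff hx]
  · exact (mem_orbitFinset_iff hx).2 ⟨u + t, iterate_add_apply g u t x⟩

theorem eq_of_mem_cycleReps (henc : Injective enc) (hr : r ∈ cycleReps enc g)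
    (hr' : r' ∈ cycleReps enc g) (h : ∃ t, g^[t] r = r') : r = r' := by
  obtain ⟨t, rfl⟩ := h
  obtain ⟨s, hs⟩ := exists_iterate_iterate_eq_self (mem_periodicPts_of_mem_cycleReps hr) t
  refine henc (le_antisymm ((mem_cycleReps.1 hr).2 t) ?_)
  calc enc (g^[t] r) ≤ enc (g^[s] (g^[t] r)) := (mem_cycleReps.1 hr').2 s
    _ = enc r := by rw [hs]

theorem pairwiseDisjoint_orbitFinset_cycleReps [DecidableEq α] (henc : Injective enc) :
    (cycleReps enc g : Set α).PairwiseDisjoint (orbitFinset g) := by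
  intro r hr r' hr' hne
  refine disjoint_left.2 fun z hz hz' => hne (eq_of_mem_cycleReps henc hr hr' ?_)
  obtain ⟨t, rfl⟩ := (mem_orbitFinset_iff (mem_periodicPts_of_mem_cycleReps hr)).1 hz
  obtain ⟨t', ht'⟩ := (mem_orbitFinset_iff (mem_periodicPts_of_mem_cycleReps hr')).1 hz'
  obtain ⟨s, hs⟩ := exists_iterate_iterate_eq_self (mem_periodicPts_of_mem_cycleReps hr') t'
  exact ⟨s + t, by rw [iterate_add_apply, ← ht', hs]⟩

end CycleReps

section Perm

open Equiv Perm

variable {α : Type*} [Fintype α] [DecidableEq α] {enc : α → ℕ} (σ : Perm α)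

theorem apply_iterate_ne_of_apply_ne {x : α} (hx : σ x ≠ x) (t : ℕ) :
    σ (σ^[t] x) ≠ σ^[t] x := by
  rw [iterate_eq_pow, ← Perm.mem_support, pow_apply_mem_support, Perm.mem_support]
  exact hx

theorem support_eq_biUnion_orbitFinset :
    σ.support = (cycleReps enc σ).biUnion (orbitFinset σ) := by
  ext x
  rw [mem_biUnion]
  constructor
  · intro hx
    obtain ⟨r, hr, s, rfl⟩ :=
      exists_mem_cycleReps_iterate_eq (enc := enc) (σ.injective.mem_periodicPts x) (Perm.mem_support.1 hx)
    exact ⟨r, hr, (mem_orbitFinset_iff (mem_periodicPts_of_mem_cycleReps hr)).2 ⟨s, rfl⟩⟩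
  · rintro ⟨r, hr, hx⟩
    obtain ⟨t, rfl⟩ := (mem_orbitFinset_iff (mem_periodicPts_of_mem_cycleReps hr)).1 hx
    exact Perm.mem_support.2 (apply_iterate_ne_of_apply_ne σ (apply_ne_of_mem_cycleReps hr) t)

variable (henc : Injective enc)
include henc

theorem prod_support_eq_prod_cycleReps {M : Type*} [CommMonoid M] (F : α → M) :
    ∏ x ∈ σ.support, F x =
      ∏ r ∈ cycleReps enc σ, ∏ t ∈ range (minimalPeriod σ r), F (σ^[t] r) := by
  rw [support_eq_biUnion_orbitFinset σ, prod_biUnion (pairwiseDisjoint_orbitFinset_cycleReps henc)]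
  exact prod_congr rfl fun r _ => prod_orbitFinset F

theorem card_cycleReps : #(cycleReps enc σ) = Multiset.card σ.cycleType := by
  rw [cycleType, Multiset.card_map]
  refine card_bij (fun x _ => σ.cycleOf x)
    (fun x hx => cycleOf_mem_cycleFactorsFinset_iff.2 (Perm.mem_support.2 (apply_ne_of_mem_cycleReps hx)))
    (fun x hx y hy hxy => ?_) (fun c hc => ?_)
  · have hsame : σ.SameCycle x y := (sameCycle_iff_cycleOf_eq_of_mem_support
      (Perm.mem_support.2 (apply_ne_of_mem_cycleReps hx))
      (Perm.mem_support.2 (apply_ne_of_mem_cycleReps hy))).2 hxy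
    obtain ⟨t, ht⟩ := hsame.exists_nat_pow_eq
    exact eq_of_mem_cycleReps henc hx hy ⟨t, ht⟩
  · obtain ⟨a, ha⟩ := (mem_cycleFactorsFinset_iff.1 hc).1.nonempty_support
    obtain ⟨r, hr, s, rfl⟩ := exists_mem_cycleReps_iterate_eq (enc := enc)
      (σ.injective.mem_periodicPts a) (Perm.mem_support.1 (mem_cycleFactorsFinset_support_le hc ha))
    exact ⟨r, hr, ((cycle_is_cycleOf ha hc).trans
      (sameCycle_pow_right.2 (SameCycle.refl σ r)).cycleOf_eq.symm).symm⟩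

theorem sign_mul_prod_neg_one_pow_minimalPeriod {K : Type*} [CommRing K] :
    ((sign σ : ℤ) : K) * ∏ r ∈ cycleReps enc σ, (-1 : K) ^ minimalPeriod σ r =
      (-1) ^ #(cycleReps enc σ) := by
  have hsupp : ∏ r ∈ cycleReps enc σ, (-1 : K) ^ minimalPeriod σ r = (-1) ^ #σ.support := by
    simpa using (prod_support_eq_prod_cycleReps σ henc fun _ => (-1 : K)).symm
  rw [hsupp, sign_of_cycleType, sum_cycleType, ← card_cycleReps σ henc]
  push_cast
  rw [← pow_add, add_right_comm, ← two_mul, pow_add, pow_mul, neg_one_sq, one_pow, one_mul]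

end Perm

section HolonomyWeight

variable {V : Type*} [Fintype V] {H : Type*} [Ring H] {K : Type*} [CommRing K]

noncomputable def holonomyWeight (τ : H → K) (enc : V → ℕ) (hh : V → V → H) (σ : Equiv.Perm V) : K :=
  ∏ x ∈ cycleReps enc σ, -τ (pathProd hh σ x (minimalPeriod σ x))

theorem detExp_eq_sum_holonomyWeight [DecidableEq V] {enc : V → ℕ} (henc : Injective enc) (τ : H → K)
    (diag : V → K) (aa : V → V → K) (hh : V → V → H) :
    detExp τ enc diag aa hh = ∑ σ : Equiv.Perm V, holonomyWeight τ enc hh σ *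
      ((∏ x ∈ univ.filter fun x => σ x = x, diag x) * ∏ x ∈ σ.support, aa x (σ x)) := by
  refine sum_congr rfl fun σ _ => ?_
  have hcycles : ∏ x ∈ cycleReps enc σ, ∏ t ∈ range (minimalPeriod σ x),
      aa (σ^[t] x) (σ^[t + 1] x) = ∏ x ∈ σ.support, aa x (σ x) := by
    simp only [prod_support_eq_prod_cycleReps σ henc, iterate_succ_apply']
  rw [holonomyWeight, prod_neg, prod_mul_distrib, prod_mul_distrib, hcycles,
    ← sign_mul_prod_neg_one_pow_minimalPeriod σ henc]
  ring

end HolonomyWeight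

section Compatible

variable {α β : Type*} {e : α → β}

def Compatible (e : α → β) (σ : Equiv.Perm α) (f : α → β) : Prop :=
  ∀ i, (σ i = i → f i ≠ e i) ∧ (σ i ≠ i → f i = e (σ i))

theorem Compatible.apply_ne (he : Injective e) {σ : Equiv.Perm α} {f : α → β}
    (hc : Compatible e σ f) (i : α) : f i ≠ e i := by
  by_cases hi : σ i = i
  · exact (hc i).1 hi
  · rw [(hc i).2 hi]
    exact fun h => hi (he h)

variable [Fintype α] [DecidableEq α] [Fintype β] [DecidableEq β]

instance (σ : Equiv.Perm α) (f : α → β) : Decidable (Compatible e σ f) := by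
  unfold Compatible; infer_instance

variable {K : Type*} [CommRing K]

theorem prod_fixedPoints_mul_prod_support_eq_sum_compatible (σ : Equiv.Perm α)
    (a : α → β → K) :
    (∏ i ∈ univ.filter (fun i => σ i = i), ∑ j ∈ univ.filter (fun j => j ≠ e i), a i j) *
      ∏ i ∈ σ.support, a i (e (σ i)) =
    ∑ f ∈ univ.filter (Compatible e σ), ∏ i, a i (f i) := by
  set T : α → Finset β := fun i => if σ i = i then univ.filter (· ≠ e i) else {e (σ i)}
  have hT : ∀ f, f ∈ Fintype.piFinset T ↔ Compatible e σ f := by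
    refine fun f => Fintype.mem_piFinset.trans (forall_congr' fun i => ?_)
    by_cases hi : σ i = i <;> simp [T, hi]
  have hprod : ∏ i, ∑ j ∈ T i, a i j =
      (∏ i ∈ univ.filter (fun i => σ i = i), ∑ j ∈ univ.filter (fun j => j ≠ e i), a i j) *
        ∏ i ∈ σ.support, a i (e (σ i)) := by
    rw [← prod_filter_mul_prod_filter_not univ (fun i => σ i = i)]
    congr 1 <;> refine prod_congr rfl fun i hi => ?_ <;> simp_all [T]
  rw [← hprod, prod_univ_sum]
  exact sum_congr (by ext f; simp [hT]) fun _ _ => rfl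

theorem sum_sum_compatible_eq_sum_fixedPointFree [Fintype {f : α → β // ∀ i, f i ≠ e i}]
    (he : Injective e) (W : Equiv.Perm α → K) (A : (α → β) → K) :
    ∑ σ, ∑ f ∈ univ.filter (Compatible e σ), W σ * A f =
      ∑ f : {f : α → β // ∀ i, f i ≠ e i}, A f * ∑ σ ∈ univ.filter (Compatible e · f), W σ := by
  rw [sum_comm' (t' := univ) (s' := fun f => univ.filter (Compatible e · f)) (by simp),
    ← sum_subtype (univ.filter fun f : α → β => ∀ i, f i ≠ e i) (by simp)
      fun f => A f * ∑ σ ∈ univ.filter (Compatible e · f), W σ, sum_filter]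
  refine sum_congr rfl fun f _ => ?_
  split_ifs with hf
  · rw [mul_sum]
    exact sum_congr rfl fun σ _ => mul_comm _ _
  · exact sum_eq_zero fun σ hσ => absurd ((mem_filter.1 hσ).2.apply_ne he) hf

end Compatible

section OnOrbitOf

variable {α : Type*} {g : α → α} {S : Finset α} {z : α}

def OnOrbitOf (g : α → α) (S : Finset α) (z : α) : Prop :=
  ∃ y ∈ S, ∃ t, g^[t] y = z

theorem OnOrbitOf.apply (h : OnOrbitOf g S z) : OnOrbitOf g S (g z) := by
  obtain ⟨y, hy, t, rfl⟩ := h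
  exact ⟨y, hy, t + 1, iterate_succ_apply' g t y⟩

theorem OnOrbitOf.mem_periodicPts_and_apply_ne [Fintype α] {enc : α → ℕ}
    (hS : S ⊆ cycleReps enc g) (h : OnOrbitOf g S z) : z ∈ periodicPts g ∧ g z ≠ z := by
  obtain ⟨y, hy, t, rfl⟩ := h
  have hper := mem_periodicPts_of_mem_cycleReps (hS hy)
  have hiter : g^[t] y ∈ periodicPts g := mk_mem_periodicPts
    (minimalPeriod_pos_of_mem_periodicPts hper) ((isPeriodicPt_minimalPeriod g y).apply_iterate t)
  refine ⟨hiter, (two_le_minimalPeriod_iff hiter).1 ?_⟩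
  rw [minimalPeriod_apply_iterate hper]
  exact (mem_cycleReps.1 (hS hy)).1

end OnOrbitOf

section Embedding

variable {n m : ℕ} {hmn : m ≤ n} {f : Fin m → Fin n}

@[simp]
theorem extFun_castLE (i : Fin m) : extFun hmn f (Fin.castLE hmn i) = f i :=
  dif_pos i.isLt

theorem val_lt_of_extFun_ne {z : Fin n} (h : extFun hmn f z ≠ z) : (z : ℕ) < m := by
  by_contra hz
  exact h (dif_neg hz)

section Compatible

variable {σ : Equiv.Perm (Fin m)} (hc : Compatible (Fin.castLE hmn) σ f)
include hc

theorem Compatible.extFun_iterate {i : Fin m} (hi : σ i ≠ i) (t : ℕ) :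
    (extFun hmn f)^[t] (Fin.castLE hmn i) = Fin.castLE hmn (σ^[t] i) := by
  induction t with
  | zero => rfl
  | succ t ih =>
    rw [iterate_succ_apply', iterate_succ_apply', ih, extFun_castLE]
    exact (hc _).2 (apply_iterate_ne_of_apply_ne σ hi t)

theorem Compatible.minimalPeriod_extFun {i : Fin m} (hi : σ i ≠ i) :
    minimalPeriod (extFun hmn f) (Fin.castLE hmn i) = minimalPeriod σ i :=
  minimalPeriod_eq_minimalPeriod_iff.2 fun t => by
    simp only [IsPeriodicPt, IsFixedPt, hc.extFun_iterate hi, (Fin.castLE_injective hmn).eq_iff]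

theorem Compatible.castLE_mem_cycleReps_iff {x : Fin m} (hx : σ x ≠ x) :
    Fin.castLE hmn x ∈ cycleReps Fin.val (extFun hmn f) ↔ x ∈ cycleReps Fin.val σ := by
  simp [hc.minimalPeriod_extFun hx, hc.extFun_iterate hx]

theorem Compatible.castLE_mem_cycleReps {x : Fin m} (hx : x ∈ cycleReps Fin.val σ) :
    Fin.castLE hmn x ∈ cycleReps Fin.val (extFun hmn f) :=
  (hc.castLE_mem_cycleReps_iff (apply_ne_of_mem_cycleReps hx)).2 hx

theorem Compatible.image_cycleReps_subset :
    (cycleReps Fin.val σ).image (Fin.castLE hmn) ⊆ cycleReps Fin.val (extFun hmn f) := by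
  rintro _ hy
  obtain ⟨x, hx, rfl⟩ := mem_image.1 hy
  exact hc.castLE_mem_cycleReps hx

theorem Compatible.pathProd_extFun {H : Type*} [Ring H] (hh : Fin n → Fin n → H) {x : Fin m}
    (hx : σ x ≠ x) (r : ℕ) :
    pathProd hh (extFun hmn f) (Fin.castLE hmn x) r =
      pathProd (fun x y => hh (Fin.castLE hmn x) (Fin.castLE hmn y)) σ x r := by
  simp only [pathProd, hc.extFun_iterate hx]

end Compatible

section CyclesPerm

open Classical in
-- The test `(f i : ℕ) < m` always passes on those orbits (`OnOrbitOf.val_apply_lt`); it is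
-- only there to make `⟨f i, _⟩` an element of `Fin m`.
noncomputable def cyclesPermFun (hmn : m ≤ n) (f : Fin m → Fin n) (S : Finset (Fin n)) :
    Fin m → Fin m := fun i =>
  if h : OnOrbitOf (extFun hmn f) S (Fin.castLE hmn i) ∧ (f i : ℕ) < m then ⟨f i, h.2⟩ else i

variable {S : Finset (Fin n)}

theorem cyclesPermFun_of_not_onOrbitOf {i : Fin m}
    (h : ¬ OnOrbitOf (extFun hmn f) S (Fin.castLE hmn i)) : cyclesPermFun hmn f S i = i :=
  dif_neg fun h' => h h'.1

variable (hS : S ⊆ cycleReps Fin.val (extFun hmn f))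
include hS

theorem OnOrbitOf.val_lt {z : Fin n} (h : OnOrbitOf (extFun hmn f) S z) : (z : ℕ) < m :=
  val_lt_of_extFun_ne (h.mem_periodicPts_and_apply_ne hS).2

theorem OnOrbitOf.val_apply_lt {i : Fin m} (h : OnOrbitOf (extFun hmn f) S (Fin.castLE hmn i)) :
    (f i : ℕ) < m := by
  simpa using h.apply.val_lt hS

theorem castLE_cyclesPermFun {i : Fin m} (h : OnOrbitOf (extFun hmn f) S (Fin.castLE hmn i)) :
    Fin.castLE hmn (cyclesPermFun hmn f S i) = f i := by
  rw [cyclesPermFun, dif_pos ⟨h, h.val_apply_lt hS⟩]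
  rfl

theorem onOrbitOf_castLE_cyclesPermFun_iff {i : Fin m} :
    OnOrbitOf (extFun hmn f) S (Fin.castLE hmn (cyclesPermFun hmn f S i)) ↔
      OnOrbitOf (extFun hmn f) S (Fin.castLE hmn i) := by
  by_cases h : OnOrbitOf (extFun hmn f) S (Fin.castLE hmn i)
  · have hnext := h.apply
    rw [extFun_castLE] at hnext
    rw [castLE_cyclesPermFun hS h]
    exact iff_of_true hnext h
  · rw [cyclesPermFun_of_not_onOrbitOf h]

theorem cyclesPermFun_injective : Injective (cyclesPermFun hmn f S) := by
  intro i j hij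
  have hon := onOrbitOf_castLE_cyclesPermFun_iff hS (i := i)
  rw [hij, onOrbitOf_castLE_cyclesPermFun_iff hS] at hon
  by_cases hj : OnOrbitOf (extFun hmn f) S (Fin.castLE hmn j)
  · have hi := hon.1 hj
    have happ : extFun hmn f (Fin.castLE hmn i) = extFun hmn f (Fin.castLE hmn j) := by
      rw [extFun_castLE, extFun_castLE, ← castLE_cyclesPermFun hS hi, hij,
        castLE_cyclesPermFun hS hj]
    exact Fin.castLE_injective hmn ((bijOn_periodicPts _).injOn
      (hi.mem_periodicPts_and_apply_ne hS).1 (hj.mem_periodicPts_and_apply_ne hS).1 happ)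
  · rwa [cyclesPermFun_of_not_onOrbitOf (mt hon.2 hj), cyclesPermFun_of_not_onOrbitOf hj] at hij

/-- The permutation keeping exactly the cycles of `extFun hmn f` listed in `S`. -/
noncomputable def cyclesPerm : Equiv.Perm (Fin m) :=
  Equiv.ofBijective _ (Finite.injective_iff_bijective.1 (cyclesPermFun_injective hS))

variable (hf : ∀ i, f i ≠ Fin.castLE hmn i)
include hf

theorem cyclesPerm_apply_ne_iff (i : Fin m) :
    cyclesPerm hS i ≠ i ↔ OnOrbitOf (extFun hmn f) S (Fin.castLE hmn i) := by
  refine ⟨fun h => by_contra fun hon => h (cyclesPermFun_of_not_onOrbitOf hon), fun hon h => ?_⟩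
  apply hf i
  rw [← castLE_cyclesPermFun hS hon]
  exact congrArg _ h

theorem compatible_cyclesPerm : Compatible (Fin.castLE hmn) (cyclesPerm hS) f := fun i =>
  ⟨fun _ => hf i, fun h => (castLE_cyclesPermFun hS ((cyclesPerm_apply_ne_iff hS hf i).1 h)).symm⟩

end CyclesPerm

theorem Compatible.onOrbitOf_image_cycleReps_iff {σ : Equiv.Perm (Fin m)}
    (hc : Compatible (Fin.castLE hmn) σ f) (i : Fin m) :
    OnOrbitOf (extFun hmn f) ((cycleReps Fin.val σ).image (Fin.castLE hmn)) (Fin.castLE hmn i) ↔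
      σ i ≠ i := by
  constructor
  · rintro ⟨_, hy, t, ht⟩
    obtain ⟨r, hr, rfl⟩ := mem_image.1 hy
    have hσr := apply_ne_of_mem_cycleReps hr
    rw [hc.extFun_iterate hσr, (Fin.castLE_injective hmn).eq_iff] at ht
    exact ht ▸ apply_iterate_ne_of_apply_ne σ hσr t
  · intro hi
    obtain ⟨r, hr, s, rfl⟩ :=
      exists_mem_cycleReps_iterate_eq (enc := Fin.val) (σ.injective.mem_periodicPts i) hi
    exact ⟨_, mem_image_of_mem _ hr, s, hc.extFun_iterate (apply_ne_of_mem_cycleReps hr) s⟩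

theorem Compatible.cyclesPerm_image_cycleReps {σ : Equiv.Perm (Fin m)}
    (hc : Compatible (Fin.castLE hmn) σ f) : cyclesPerm hc.image_cycleReps_subset = σ := by
  ext i : 1
  by_cases hi : σ i = i
  · rw [hi]
    exact cyclesPermFun_of_not_onOrbitOf (mt (hc.onOrbitOf_image_cycleReps_iff i).1 (not_not.2 hi))
  · apply Fin.castLE_injective hmn
    rw [← (hc i).2 hi]
    exact castLE_cyclesPermFun hc.image_cycleReps_subset ((hc.onOrbitOf_image_cycleReps_iff i).2 hi)

theorem image_cycleReps_cyclesPerm {S : Finset (Fin n)} (hS : S ⊆ cycleReps Fin.val (extFun hmn f))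
    (hf : ∀ i, f i ≠ Fin.castLE hmn i) :
    (cycleReps Fin.val (cyclesPerm hS)).image (Fin.castLE hmn) = S := by
  have hc := compatible_cyclesPerm hS hf
  ext y
  constructor
  · intro hy
    obtain ⟨x, hx, rfl⟩ := mem_image.1 hy
    obtain ⟨y', hy', t, ht⟩ := (cyclesPerm_apply_ne_iff hS hf x).1 (apply_ne_of_mem_cycleReps hx)
    rwa [← eq_of_mem_cycleReps Fin.val_injective (hS hy') (hc.castLE_mem_cycleReps hx) ⟨t, ht⟩]
  · intro hy
    obtain ⟨x, rfl⟩ : ∃ x : Fin m, Fin.castLE hmn x = y :=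
      ⟨⟨y, val_lt_of_extFun_ne (apply_ne_of_mem_cycleReps (hS hy))⟩, rfl⟩
    have hx := (cyclesPerm_apply_ne_iff hS hf x).2 ⟨_, hy, 0, rfl⟩
    exact mem_image_of_mem _ ((hc.castLE_mem_cycleReps_iff hx).1 (hS hy))

theorem sum_compatible_holonomyWeight {H K : Type*} [Ring H] [CommRing K] (τ : H → K)
    (hh : Fin n → Fin n → H) (hf : ∀ i, f i ≠ Fin.castLE hmn i) :
    ∑ σ ∈ univ.filter (Compatible (Fin.castLE hmn) · f),
      holonomyWeight τ Fin.val (fun x y => hh (Fin.castLE hmn x) (Fin.castLE hmn y)) σ =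
    ∏ x ∈ cycleReps Fin.val (extFun hmn f),
      (1 - τ (pathProd hh (extFun hmn f) x (minimalPeriod (extFun hmn f) x))) := by
  simp_rw [sub_eq_add_neg]
  rw [prod_one_add]
  refine sum_bij' (fun σ _ => (cycleReps Fin.val σ).image (Fin.castLE hmn))
    (fun S hS => cyclesPerm (mem_powerset.1 hS))
    (fun σ hσ => mem_powerset.2 (mem_filter.1 hσ).2.image_cycleReps_subset)
    (fun S hS => mem_filter.2 ⟨mem_univ _, compatible_cyclesPerm _ hf⟩)
    (fun σ hσ => (mem_filter.1 hσ).2.cyclesPerm_image_cycleReps)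
    (fun S hS => image_cycleReps_cyclesPerm _ hf) (fun σ hσ => ?_)
  have hc := (mem_filter.1 hσ).2
  rw [holonomyWeight, prod_image (Fin.castLE_injective hmn).injOn]
  refine prod_congr rfl fun x hx => ?_
  have hσx := apply_ne_of_mem_cycleReps hx
  rw [hc.minimalPeriod_extFun hσx, hc.pathProd_extFun hh hσx]

end Embedding

theorem stmt0_general {H K : Type*} [Ring H] [CommRing K]
    (n m : ℕ) (hmn : m ≤ n)
    (τ : H →+ K)
    (a : Fin n → Fin n → K) (h : Fin n → Fin n → H) :
    detExp (⇑τ) (Fin.val : Fin m → ℕ)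
      (fun i => ∑ j ∈ Finset.univ.filter fun j => j ≠ Fin.castLE hmn i,
        a (Fin.castLE hmn i) j)
      (fun x y => a (Fin.castLE hmn x) (Fin.castLE hmn y))
      (fun x y => h (Fin.castLE hmn x) (Fin.castLE hmn y)) =
    ∑ f : {f : Fin m → Fin n // ∀ i, f i ≠ Fin.castLE hmn i},
      (∏ i : Fin m, a (Fin.castLE hmn i) (f.1 i)) *
        ∏ x ∈ cycleReps Fin.val (extFun hmn f.1),
          (1 - τ (pathProd h (extFun hmn f.1) x (minimalPeriod (extFun hmn f.1) x))) := by
  set W := holonomyWeight τ Fin.val fun x y => h (Fin.castLE hmn x) (Fin.castLE hmn y)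
  calc _ = ∑ σ, ∑ f ∈ univ.filter (Compatible (Fin.castLE hmn) σ),
          W σ * ∏ i, a (Fin.castLE hmn i) (f i) := by
        rw [detExp_eq_sum_holonomyWeight Fin.val_injective]
        refine sum_congr rfl fun σ _ => ?_
        rw [prod_fixedPoints_mul_prod_support_eq_sum_compatible σ
          fun i j => a (Fin.castLE hmn i) j, mul_sum]
    _ = ∑ f : {f : Fin m → Fin n // ∀ i, f i ≠ Fin.castLE hmn i},
          (∏ i, a (Fin.castLE hmn i) (f.1 i)) *
            ∑ σ ∈ univ.filter (Compatible (Fin.castLE hmn) · f.1), W σ :=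
        sum_sum_compatible_eq_sum_fixedPointFree (Fin.castLE_injective hmn) W
          fun f => ∏ i, a (Fin.castLE hmn i) (f i)
    _ = _ := sum_congr rfl fun f _ => by rw [sum_compatible_holonomyWeight τ h f.2]

theorem stmt0 {H K : Type*} [Ring H] [CommRing K]
    (n m : ℕ) (hn : 2 ≤ n) (hm : 1 ≤ m) (hmn : m ≤ n)
    (τ : H →+ K) (hτ : ∀ r r' : H, τ (r * r') = τ (r' * r))
    (a : Fin n → Fin n → K) (h : Fin n → Fin n → H) :
    detExp (⇑τ) (Fin.val : Fin m → ℕ)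
      (fun i => ∑ j ∈ Finset.univ.filter fun j => j ≠ Fin.castLE hmn i,
        a (Fin.castLE hmn i) j)
      (fun x y => a (Fin.castLE hmn x) (Fin.castLE hmn y))
      (fun x y => h (Fin.castLE hmn x) (Fin.castLE hmn y)) =
    ∑ f : {f : Fin m → Fin n // ∀ i, f i ≠ Fin.castLE hmn i},
      (∏ i : Fin m, a (Fin.castLE hmn i) (f.1 i)) *
        ∏ x ∈ cycleReps Fin.val (extFun hmn f.1),
          (1 - τ (pathProd h (extFun hmn f.1) x (minimalPeriod (extFun hmn f.1) x))) :=
  stmt0_general n m hmn τ a h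
end

section
/- Let K be a commutative ring and a_{ij} ∈ K for every edge (i,j) ∈ E. Let Δ be the (untwisted) Laplacian, i.e., the n×n matrix with Δ_{ij} = −a_{ij} for i ≠ j and Δ_{ii} = Σ_{j≠i} a_{ij}. Then the ordinary determinant of the top-left m×m principal submatrix satisfies det Δ_[m] = Σ_F a_F, where the sum runs over all well-rooted spanning forests F, i.e., cycle-and-well-rooted spanning forests with 𝒞(F) = ∅ (equivalently, functions f : U → V with f(i) ≠ i such that for every i ∈ U some iterate of f starting from i lands in the well W). -/
/-!
Expanding each row of `Δ_[m]` by multilinearity writes `det Δ_[m]` as `∑_f a_f det(I - P_f)` over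
all `f : U → V`, where `P_f` is the `0/1` matrix of the restriction of `f` to `U`. If every vertex
eventually reaches the well, a permutation `σ` with nonzero term has `f (σ i) = i` whenever
`σ i ≠ i`, so `σ` never decreases the distance to the well and raises it at every moved vertex;
summing over all vertices, `σ` must be the identity and `det(I - P_f) = 1`. Otherwise the indicator of the
vertices that never reach the well is a nonzero kernel vector of `I - P_f`, so `det(I - P_f) = 0`.
-/

open Finset Function

theorem Matrix.det_of_sum_rows {ι β K : Type*} [Fintype ι] [DecidableEq ι] [CommRing K]
    (A : ι → Finset β) (g : ι → β → ι → K) :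
    (Matrix.of fun i => ∑ k ∈ A i, g i k).det =
      ∑ r ∈ Fintype.piFinset A, (Matrix.of fun i => g i (r i)).det :=
  Matrix.detRowAlternating.toMultilinearMap.map_sum_finset g A

section WellRootedForest

variable {ι V K : Type*}

/-- `extend e f id` is `f` on the inner vertices `e i` and the identity on the well. -/
def ReachesWell (e f : ι → V) (i : ι) : Prop :=
  ∃ k, (extend e f id)^[k] (e i) ∉ Set.range e

variable {e f : ι → V}

theorem reachesWell_of_apply_notMem (he : Injective e) {i : ι} (hi : f i ∉ Set.range e) :
    ReachesWell e f i :=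
  ⟨1, by rwa [iterate_one, he.extend_apply]⟩

theorem reachesWell_iff_of_apply_eq (he : Injective e) {i j : ι} (hij : f i = e j) :
    ReachesWell e f i ↔ ReachesWell e f j := by
  constructor
  · rintro ⟨_ | k, hk⟩
    · exact absurd (Set.mem_range_self i) hk
    · exact ⟨k, by rwa [iterate_succ_apply, he.extend_apply, hij] at hk⟩
  · rintro ⟨k, hk⟩
    exact ⟨k + 1, by rwa [iterate_succ_apply, he.extend_apply, hij]⟩

open Classical in
noncomputable def ReachesWell.depth {i : ι} (hi : ReachesWell e f i) : ℕ := Nat.find hi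

theorem ReachesWell.depth_lt_depth (he : Injective e) {i j : ι} (hi : ReachesWell e f i)
    (hj : ReachesWell e f j) (hij : f i = e j) : hj.depth < hi.depth := by
  classical
  unfold ReachesWell.depth
  obtain ⟨d, hd⟩ := Nat.exists_eq_add_one_of_ne_zero <|
    (Nat.find_eq_zero hi).not.2 (not_not.2 (Set.mem_range_self i))
  have hspec := Nat.find_spec hi
  rw [hd, iterate_succ_apply, he.extend_apply, hij] at hspec
  exact hd ▸ Nat.lt_succ_of_le (Nat.find_min' hj hspec)

theorem ReachesWell.apply_ne (he : Injective e) {i : ι} (hi : ReachesWell e f i) : f i ≠ e i :=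
  fun h => (hi.depth_lt_depth he hi h).false

variable [DecidableEq ι] [CommRing K] [DecidableEq V]

def edgeMatrix (e f : ι → V) : Matrix ι ι K :=
  Matrix.of fun i j => if f i = e j then 1 else 0

theorem one_sub_edgeMatrix_apply_ne_zero {i j : ι}
    (h : (1 - edgeMatrix e f : Matrix ι ι K) i j ≠ 0) : i = j ∨ f i = e j := by
  by_contra! hij
  simp [edgeMatrix, hij.1, hij.2] at h

variable [Fintype ι]

theorem prod_one_sub_edgeMatrix_perm_eq_zero (he : Injective e) (h : ∀ i, ReachesWell e f i)
    {σ : Equiv.Perm ι} (hσ : σ ≠ 1) : ∏ i, (1 - edgeMatrix e f : Matrix ι ι K) (σ i) i = 0 := by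
  by_contra hprod
  have hstep (i : ι) (hi : σ i ≠ i) : f (σ i) = e i :=
    (one_sub_edgeMatrix_apply_ne_zero fun h0 => hprod (prod_eq_zero (mem_univ i) h0)).resolve_left hi
  have hdepth (i : ι) : (h i).depth ≤ (h (σ i)).depth := by
    by_cases hi : σ i = i
    · rw [hi]
    · exact ((h (σ i)).depth_lt_depth he (h i) (hstep i hi)).le
  obtain ⟨i, hi⟩ : ∃ i, σ i ≠ i := by
    by_contra! hfix
    exact hσ (Equiv.ext hfix)
  have hlt := sum_lt_sum (fun i _ => hdepth i)
    ⟨i, mem_univ i, (h (σ i)).depth_lt_depth he (h i) (hstep i hi)⟩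
  rw [Equiv.sum_comp σ fun i => (h i).depth] at hlt
  exact hlt.false

theorem det_one_sub_edgeMatrix_of_reachesWell (he : Injective e) (h : ∀ i, ReachesWell e f i) :
    (1 - edgeMatrix e f : Matrix ι ι K).det = 1 := by
  rw [Matrix.det_apply, sum_eq_single 1
    (fun σ _ hσ => by rw [prod_one_sub_edgeMatrix_perm_eq_zero he h hσ, smul_zero])
    (fun h1 => absurd (mem_univ 1) h1)]
  simp [edgeMatrix, fun i => (h i).apply_ne he]

/-- The indicator of the vertices that never reach the well lies in the kernel of `1 - P_f`. -/
theorem det_one_sub_edgeMatrix_of_not_reachesWell (he : Injective e) {i₀ : ι}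
    (h : ¬ ReachesWell e f i₀) : (1 - edgeMatrix e f : Matrix ι ι K).det = 0 := by
  classical
  set v : ι → K := fun i => if ReachesWell e f i then 0 else 1
  refine Matrix.det_eq_zero_of_mulVec_eq_zero_of_mem_nonZeroDivisors (v := v) (i := i₀) ?_
    (by simp [v, h])
  ext i
  suffices (edgeMatrix e f).mulVec v i = v i by simp [Matrix.sub_mulVec, this]
  simp only [edgeMatrix, Matrix.mulVec, dotProduct, Matrix.of_apply, ite_mul, one_mul, zero_mul]
  by_cases hi : f i ∈ Set.range e
  · obtain ⟨j, hj⟩ := hi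
    simp_rw [← hj, he.eq_iff, sum_ite_eq, mem_univ, if_true, v,
      reachesWell_iff_of_apply_eq he hj.symm]
  · have hne (j : ι) : f i ≠ e j := fun hj => hi ⟨j, hj.symm⟩
    simp [hne, v, reachesWell_of_apply_notMem he hi]

theorem det_one_sub_edgeMatrix (he : Injective e) [Decidable (∀ i, ReachesWell e f i)] :
    (1 - edgeMatrix e f : Matrix ι ι K).det = if ∀ i, ReachesWell e f i then 1 else 0 := by
  split_ifs with h
  · exact det_one_sub_edgeMatrix_of_reachesWell he h
  · obtain ⟨i, hi⟩ := not_forall.1 h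
    exact det_one_sub_edgeMatrix_of_not_reachesWell he hi

end WellRootedForest

section Laplacian

variable {ι V K : Type*} [DecidableEq ι] [Fintype V] [DecidableEq V] [CommRing K] {e : ι → V}

def laplacian (a : V → V → K) : Matrix V V K :=
  Matrix.of fun i j => if i = j then ∑ k ∈ univ.filter fun k => k ≠ i, a i k else -a i j

theorem laplacian_submatrix_eq_sum_rows (he : Injective e) (a : V → V → K) :
    (laplacian a).submatrix e e = Matrix.of fun i =>
      ∑ k ∈ univ.filter (· ≠ e i), a (e i) k • (Pi.single i 1 - fun j => if k = e j then 1 else 0) := by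
  ext i j
  simp only [Matrix.submatrix_apply, laplacian, Matrix.of_apply, Finset.sum_apply, Pi.smul_apply,
    Pi.sub_apply, smul_eq_mul, mul_sub, sum_sub_distrib, mul_ite, mul_one, mul_zero,
    sum_ite_eq', he.eq_iff, Pi.single_apply, mem_filter, mem_univ, true_and]
  by_cases hij : i = j
  · simp [hij]
  · simp [hij, Ne.symm hij, Ne.symm (he.ne hij)]

variable [Fintype ι]

theorem det_laplacian_submatrix (he : Injective e)
    [DecidablePred fun f : ι → V => ∀ i, ReachesWell e f i] (a : V → V → K) :
    ((laplacian a).submatrix e e).det =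
      ∑ f ∈ univ.filter fun f : ι → V => ∀ i, ReachesWell e f i, ∏ i, a (e i) (f i) := by
  have hterm (f : ι → V) : (Matrix.of fun i =>
      a (e i) (f i) • (Pi.single i 1 - fun j => if f i = e j then (1 : K) else 0)).det =
      (∏ i, a (e i) (f i)) * if ∀ i, ReachesWell e f i then 1 else 0 := by
    rw [← det_one_sub_edgeMatrix he, ← Matrix.det_mul_column]
    congr 1
    ext i j
    simp [edgeMatrix, Pi.single_apply, Matrix.one_apply, eq_comm]
  have hfilter : (Fintype.piFinset fun i => univ.filter (· ≠ e i)).filter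
      (fun f : ι → V => ∀ i, ReachesWell e f i) = univ.filter fun f => ∀ i, ReachesWell e f i := by
    ext f
    simp only [mem_filter, Fintype.mem_piFinset, mem_univ, true_and, and_iff_right_iff_imp]
    exact fun hf i => (hf i).apply_ne he
  rw [laplacian_submatrix_eq_sum_rows he, Matrix.det_of_sum_rows, ← hfilter, sum_filter]
  exact sum_congr rfl fun f _ => by rw [hterm, mul_ite, mul_one, mul_zero]

end Laplacian

theorem extFun_eq_extend {n m : ℕ} (hmn : m ≤ n) (f : Fin m → Fin n) :
    extFun hmn f = extend (Fin.castLE hmn) f id := by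
  funext x
  by_cases hx : (x : ℕ) < m
  · rw [show x = Fin.castLE hmn ⟨x, hx⟩ from rfl, (Fin.castLE_injective hmn).extend_apply]
    exact dif_pos hx
  · rw [extend_apply' _ _ _ fun ⟨y, hy⟩ => hx (hy ▸ y.isLt)]
    simp [extFun, hx]

theorem reachesWell_castLE_iff {n m : ℕ} (hmn : m ≤ n) (f : Fin m → Fin n) (i : Fin m) :
    ReachesWell (Fin.castLE hmn) f i ↔ ∃ k, m ≤ ((extFun hmn f)^[k] (Fin.castLE hmn i) : ℕ) := by
  simp [ReachesWell, extFun_eq_extend, Fin.range_castLE]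

theorem filter_reachesWell_castLE_eq_map {n m : ℕ} (hmn : m ≤ n)
    [DecidablePred fun f : Fin m → Fin n => ∀ i, ReachesWell (Fin.castLE hmn) f i] :
    univ.filter (fun f => ∀ i, ReachesWell (Fin.castLE hmn) f i) =
      (@Finset.filter {f : Fin m → Fin n // ∀ i, f i ≠ Fin.castLE hmn i}
        (fun f => ∀ i : Fin m, ∃ k : ℕ, m ≤ ((extFun hmn f.1)^[k] (Fin.castLE hmn i) : ℕ))
        (Classical.decPred _) univ).map (Embedding.subtype _) := by
  ext f
  simp only [mem_filter, mem_univ, true_and, mem_map, Embedding.subtype_apply,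
    Subtype.exists, exists_and_right, exists_eq_right, ← reachesWell_castLE_iff]
  exact ⟨fun hf => ⟨fun i => (hf i).apply_ne (Fin.castLE_injective hmn), hf⟩, fun ⟨_, hf⟩ => hf⟩

theorem stmt6_general {K : Type*} [CommRing K]
    (n m : ℕ) (hmn : m ≤ n)
    (a : Fin n → Fin n → K) :
    Matrix.det
      ((Matrix.of fun i j : Fin n =>
          if i = j then ∑ k ∈ Finset.univ.filter fun k => k ≠ i, a i k
          else - a i j).submatrix (Fin.castLE hmn) (Fin.castLE hmn)) =
    ∑ f ∈ @Finset.filter {f : Fin m → Fin n // ∀ i, f i ≠ Fin.castLE hmn i}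
        (fun f => ∀ i : Fin m, ∃ k : ℕ, m ≤ ((extFun hmn f.1)^[k] (Fin.castLE hmn i) : ℕ))
        (Classical.decPred _) Finset.univ,
      ∏ i : Fin m, a (Fin.castLE hmn i) (f.1 i) := by
  classical
  refine (det_laplacian_submatrix (Fin.castLE_injective hmn) a).trans ?_
  rw [filter_reachesWell_castLE_eq_map, sum_map]
  rfl

theorem stmt6 {K : Type*} [CommRing K]
    (n m : ℕ) (hn : 2 ≤ n) (hm : 1 ≤ m) (hmn : m ≤ n)
    (a : Fin n → Fin n → K) :
    Matrix.det
      ((Matrix.of fun i j : Fin n =>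
          if i = j then ∑ k ∈ Finset.univ.filter fun k => k ≠ i, a i k
          else - a i j).submatrix (Fin.castLE hmn) (Fin.castLE hmn)) =
    ∑ f ∈ @Finset.filter {f : Fin m → Fin n // ∀ i, f i ≠ Fin.castLE hmn i}
        (fun f => ∀ i : Fin m, ∃ k : ℕ, m ≤ ((extFun hmn f.1)^[k] (Fin.castLE hmn i) : ℕ))
        (Classical.decPred _) Finset.univ,
      ∏ i : Fin m, a (Fin.castLE hmn i) (f.1 i) :=
  stmt6_general n m hmn a
end

section
/- Fix N ≥ 1 and attach to each edge (i,j) ∈ E a matrix h_{ij} ∈ M_N(ℂ) such that h_{ji} h_{ij} = I_N for every edge. Work in the polynomial ring ℂ[x_e : e an unordered pair {i,j}, i ≠ j], and let Δ be the Nn×Nn matrix over this ring indexed by V×{1,…,N} with Δ_{(i,k),(j,l)} = −(h_{ij})_{kl} x_{{i,j}} for i ≠ j and Δ_{(i,k),(i,l)} = δ_{kl} Σ_{j ≠ i} x_{{i,j}}. Then in the ordinary determinant det Δ_[Nm] of the principal submatrix indexed by U×{1,…,N}, every monomial in which some variable x_e appears with degree strictly greater than N has coefficient zero. -/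
/-!
Orient every edge as `i < j`. The matrix `Δ` factors as `∂ · diag(x) · δ` through the index set
(oriented edges) × `[N]`: the row `(ij, l)` of `δ` carries `I` at `i` and `-h_{ij}` at `j`, the
column `(ij, l)` of `∂` carries `I` at `i` and `-h_{ji}` at `j`, and `h_{ji} h_{ij} = I` is what
makes the `(j, j)` block of `∂ δ` the identity. Expanding `det (∂ diag(x) δ)` along maps `f` from rows to
columns, a term vanishes unless `f` is injective, and then its monomial is `∏ₚ x_{f p}`. The variable
`x_e` labels only the `N` columns `(e, 1), …, (e, N)`, so it occurs with exponent at most `N`.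
-/

open Finset Matrix MvPolynomial

theorem Matrix.det_mul_eq_sum_det_submatrix_mul_prod {s t R : Type*} [Fintype s] [DecidableEq s]
    [Fintype t] [CommRing R] (A : Matrix s t R) (B : Matrix t s R) :
    (A * B).det = ∑ f : s → t, (A.submatrix id f).det * ∏ i, B (f i) i := by
  simp only [det_apply, submatrix_apply, id, Matrix.mul_apply, prod_univ_sum, Fintype.piFinset_univ,
    smul_sum, sum_mul, prod_mul_distrib, smul_mul_assoc]
  exact sum_comm

theorem MvPolynomial.coeff_eq_zero_of_degreeOf_lt {σ R : Type*} [CommSemiring R]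
    {p : MvPolynomial σ R} {d : σ →₀ ℕ} {e : σ} (hd : p.degreeOf e < d e) : p.coeff d = 0 :=
  notMem_support_iff.mp fun hmem => (degreeOf_le_iff.mp le_rfl d hmem).not_gt hd

theorem MvPolynomial.degreeOf_det_mul_le {s t σ R : Type*} [Fintype s] [DecidableEq s]
    [Fintype t] [CommRing R] [Nontrivial R] [DecidableEq σ]
    (a : Matrix s t R) (g : t → σ) (B : Matrix t s (MvPolynomial σ R)) {e : σ}
    (hB : ∀ q r, (B q r).degreeOf e = 0) :
    (of (fun p q => X (g q) * C (a p q)) * B).det.degreeOf e ≤ #{q | g q = e} := by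
  rw [det_mul_eq_sum_det_submatrix_mul_prod]
  refine (degreeOf_sum_le _ _ _).trans (Finset.sup_le fun f _ => ?_)
  have hdet : ((of (fun p q => X (g q) * C (a p q)) : Matrix s t (MvPolynomial σ R)).submatrix
      id f).det = (∏ p, X (g (f p))) * C (a.submatrix id f).det := by
    rw [RingHom.map_det, ← det_mul_row]
    rfl
  by_cases hf : Function.Injective f
  · calc _ ≤ ∑ p, (X (g (f p)) : MvPolynomial σ R).degreeOf e := by
          have hBf : (∏ p, B (f p) p).degreeOf e = 0 :=
            Nat.eq_zero_of_le_zero <| (degreeOf_prod_le _ _ _).trans (by simp [hB])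
          refine (degreeOf_mul_le _ _ _).trans ?_
          rw [hdet, hBf, add_zero]
          exact (degreeOf_mul_C_le _ _ _).trans (degreeOf_prod_le _ _ _)
      _ = #{p | g (f p) = e} := by simp [degreeOf_X, eq_comm]
      _ ≤ #{q | g q = e} := card_le_card_of_injOn f (fun p hp => by simpa using hp) hf.injOn
  · obtain ⟨p, p', hpp', hne⟩ := Function.not_injective_iff.mp hf
    rw [hdet, det_zero_of_column_eq hne fun k => by simp [hpp']]
    simp

theorem Finset.sum_subtype_lt_add_swap {ι M : Type*} [Fintype ι] [LinearOrder ι] [AddCommMonoid M]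
    (F : ι → ι → M) :
    ∑ ij : {ij : ι × ι // ij.1 < ij.2}, (F ij.1.1 ij.1.2 + F ij.1.2 ij.1.1) =
      ∑ i, ∑ j with j ≠ i, F i j := by
  have hsplit : ∀ i j : ι, (if j ≠ i then F i j else 0) =
      (if i < j then F i j else 0) + (if j < i then F i j else 0) := by
    intro i j
    rcases lt_trichotomy i j with hij | rfl | hij
    · simp [hij, hij.ne', not_lt_of_gt hij]
    · simp
    · simp [hij, hij.ne, not_lt_of_gt hij]
  rw [← sum_subtype (univ.filter fun ij : ι × ι => ij.1 < ij.2) (by simp)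
    (fun ij => F ij.1 ij.2 + F ij.2 ij.1), sum_filter, Fintype.sum_prod_type]
  simp_rw [ite_add_zero, sum_add_distrib, sum_filter, hsplit, sum_add_distrib]
  rw [sum_comm (f := fun i j => if i < j then F j i else 0)]

theorem Sym2.mk_injective_of_lt {ι : Type*} [LinearOrder ι] :
    Function.Injective fun ij : {ij : ι × ι // ij.1 < ij.2} => s(ij.1.1, ij.1.2) := by
  rintro ⟨⟨a, b⟩, hab⟩ ⟨⟨c, d⟩, hcd⟩ h
  rcases Sym2.mk_eq_mk_iff.mp h with h | h <;> simp only [Prod.swap_prod_mk, Prod.mk.injEq] at h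
  · simp [h]
  · exact absurd hab (h.1 ▸ h.2 ▸ lt_asymm hcd)

theorem Finset.card_filter_apply_fst_eq_le {E ι σ : Type*} [Fintype E] [Fintype ι] [DecidableEq σ]
    {g : E → σ} (hg : Function.Injective g) (e : σ) :
    #{q : E × ι | g q.1 = e} ≤ Fintype.card ι :=
  card_le_card_of_injOn Prod.snd (fun _ _ => mem_univ _) fun _ hq _ hq' hsnd =>
    Prod.ext (hg ((mem_filter.1 hq).2.trans (mem_filter.1 hq').2.symm)) hsnd

section ConnectionLaplacian

variable {n N : ℕ}

def incidenceBlock (i j w : Fin n) (H : Matrix (Fin N) (Fin N) ℂ) : Matrix (Fin N) (Fin N) ℂ :=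
  if w = i then 1 else if w = j then -H else 0

theorem incidenceBlock_mul_incidenceBlock {i j : Fin n} (hij : i ≠ j)
    {H H' : Matrix (Fin N) (Fin N) ℂ} (hH : H' * H = 1) (v w : Fin n) :
    incidenceBlock i j v H' * incidenceBlock i j w H =
      (if v = i then incidenceBlock i j w H else 0) +
        (if v = j then incidenceBlock j i w H' else 0) := by
  unfold incidenceBlock
  split_ifs <;> simp_all

noncomputable def connectionLaplacian (h : Fin n → Fin n → Matrix (Fin N) (Fin N) ℂ) :
    Matrix (Fin n × Fin N) (Fin n × Fin N) (MvPolynomial (Sym2 (Fin n)) ℂ) :=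
  of fun p q =>
    if p.1 = q.1 then (if p.2 = q.2 then ∑ j with j ≠ p.1, X s(p.1, j) else 0)
    else -(C (h p.1 q.1 p.2 q.2) * X s(p.1, q.1))

theorem connectionLaplacian_apply (h : Fin n → Fin n → Matrix (Fin N) (Fin N) ℂ)
    (v w : Fin n) (k t : Fin N) :
    connectionLaplacian h (v, k) (w, t) =
      ∑ j with j ≠ v, X s(v, j) * C (incidenceBlock v j w (h v j) k t) := by
  rcases eq_or_ne v w with rfl | hvw
  · simp [connectionLaplacian, incidenceBlock, one_apply, apply_ite C, mul_ite]
  · rw [sum_eq_single_of_mem w (by simpa using hvw.symm) fun j _ hjw => by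
      simp [incidenceBlock, hvw.symm, Ne.symm hjw]]
    simp [connectionLaplacian, incidenceBlock, hvw, hvw.symm, mul_comm]

abbrev OrientedEdge (n : ℕ) := {ij : Fin n × Fin n // ij.1 < ij.2}

def boundary (h : Fin n → Fin n → Matrix (Fin N) (Fin N) ℂ) :
    Matrix (Fin n × Fin N) (OrientedEdge n × Fin N) ℂ :=
  of fun p q => incidenceBlock q.1.1.1 q.1.1.2 p.1 (h q.1.1.2 q.1.1.1) p.2 q.2

def coboundary (h : Fin n → Fin n → Matrix (Fin N) (Fin N) ℂ) :
    Matrix (OrientedEdge n × Fin N) (Fin n × Fin N) ℂ :=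
  of fun q r => incidenceBlock q.1.1.1 q.1.1.2 r.1 (h q.1.1.1 q.1.1.2) q.2 r.2

theorem connectionLaplacian_eq_mul (h : Fin n → Fin n → Matrix (Fin N) (Fin N) ℂ)
    (hinv : ∀ i j : Fin n, i ≠ j → h j i * h i j = 1) :
    connectionLaplacian h =
      of (fun p q => X s(q.1.1.1, q.1.1.2) * C (boundary h p q)) *
        (coboundary h).map (C : ℂ →+* MvPolynomial (Sym2 (Fin n)) ℂ) := by
  refine Matrix.ext fun ⟨v, k⟩ ⟨w, t⟩ => ?_
  let F : Fin n → Fin n → MvPolynomial (Sym2 (Fin n)) ℂ := fun i j =>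
    if v = i then X s(i, j) * C (incidenceBlock i j w (h i j) k t) else 0
  have hedge : ∀ ij : OrientedEdge n,
      ∑ l, X s(ij.1.1, ij.1.2) * C (boundary h (v, k) (ij, l)) * C (coboundary h (ij, l) (w, t)) =
        F ij.1.1 ij.1.2 + F ij.1.2 ij.1.1 := by
    rintro ⟨⟨i, j⟩, hij⟩
    simp_rw [mul_assoc, ← C_mul, ← mul_sum, ← map_sum]
    simp only [boundary, coboundary, of_apply, F]
    rw [← mul_apply, incidenceBlock_mul_incidenceBlock hij.ne (hinv i j hij.ne), Sym2.eq_swap]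
    split_ifs <;> simp [mul_add]
  rw [connectionLaplacian_apply, mul_apply, Fintype.sum_prod_type]
  simp only [of_apply, map_apply]
  rw [sum_congr rfl fun ij _ => hedge ij, sum_subtype_lt_add_swap]
  simp [F]

end ConnectionLaplacian

theorem stmt12_general (n m N : ℕ) (hmn : m ≤ n)
    (h : Fin n → Fin n → Matrix (Fin N) (Fin N) ℂ)
    (hinv : ∀ i j : Fin n, i ≠ j → h j i * h i j = 1) :
    ∀ dm : Sym2 (Fin n) →₀ ℕ,
      (∃ e : Sym2 (Fin n), ¬ e.IsDiag ∧ N < dm e) →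
      MvPolynomial.coeff dm
        (Matrix.det
          ((Matrix.of fun p q : Fin n × Fin N =>
              if p.1 = q.1 then
                (if p.2 = q.2 then
                  ∑ j ∈ Finset.univ.filter fun j => j ≠ p.1,
                    MvPolynomial.X (R := ℂ) (Sym2.mk p.1 j)
                else 0)
              else
                - (MvPolynomial.C (h p.1 q.1 p.2 q.2) *
                    MvPolynomial.X (Sym2.mk p.1 q.1))).submatrix
            (fun p : Fin m × Fin N => ((Fin.castLE hmn p.1, p.2) : Fin n × Fin N))
            (fun p : Fin m × Fin N => ((Fin.castLE hmn p.1, p.2) : Fin n × Fin N)))) = 0 := by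
  rintro dm ⟨e, -, hNe⟩
  show coeff dm (det ((connectionLaplacian h).submatrix _ _)) = 0
  rw [connectionLaplacian_eq_mul h hinv, submatrix_mul _ _ _ id _ Function.bijective_id]
  refine coeff_eq_zero_of_degreeOf_lt (lt_of_le_of_lt ?_ hNe)
  calc _ ≤ #{q : OrientedEdge n × Fin N | s(q.1.1.1, q.1.1.2) = e} :=
        degreeOf_det_mul_le ((boundary h).submatrix _ id) _ _ fun _ _ => degreeOf_C _ _
    _ ≤ N := (card_filter_apply_fst_eq_le Sym2.mk_injective_of_lt e).trans (Fintype.card_fin N).le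

theorem stmt12 (n m N : ℕ) (hn : 2 ≤ n) (hm : 1 ≤ m) (hmn : m ≤ n) (hN : 1 ≤ N)
    (h : Fin n → Fin n → Matrix (Fin N) (Fin N) ℂ)
    (hinv : ∀ i j : Fin n, i ≠ j → h j i * h i j = 1) :
    ∀ dm : Sym2 (Fin n) →₀ ℕ,
      (∃ e : Sym2 (Fin n), ¬ e.IsDiag ∧ N < dm e) →
      MvPolynomial.coeff dm
        (Matrix.det
          ((Matrix.of fun p q : Fin n × Fin N =>
              if p.1 = q.1 then
                (if p.2 = q.2 then
                  ∑ j ∈ Finset.univ.filter fun j => j ≠ p.1,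
                    MvPolynomial.X (R := ℂ) (Sym2.mk p.1 j)
                else 0)
              else
                - (MvPolynomial.C (h p.1 q.1 p.2 q.2) *
                    MvPolynomial.X (Sym2.mk p.1 q.1))).submatrix
            (fun p : Fin m × Fin N => ((Fin.castLE hmn p.1, p.2) : Fin n × Fin N))
            (fun p : Fin m × Fin N => ((Fin.castLE hmn p.1, p.2) : Fin n × Fin N)))) = 0 :=
  stmt12_general n m N hmn h hinv
end
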